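/- arXiv:2505.12411 — 2 statements merged into one kernel-verified Lean document; each statement's English description precedes it below -/
import Mathlib

section
/- Let E be a nonempty finite set of edges on a labeled vertex set and let D ⊆ E be nonempty, and for a natural number k with k ≤ |D| and k < |E| let Ed(k) denote the expectation over a uniformly random k-subset S of D of the edge homophily H(E \ S) (note |E \ S| = |E| − k since S ⊆ D ⊆ E). Then: (i) if H(D) < H(E) (which forces D ≠ E, hence |D| < |E|), then Ed(k+1) > Ed(k) for every k with k + 1 ≤ |D|, and Ed(k) > H(E) for every k with 1 ≤ k ≤ |D|; (ii) if H(D) ≥ H(E), then Ed(k+1) ≤ Ed(k) for every k with k + 1 ≤ |D| and k + 1 < |E|, and Ed(k) ≤ H(E) for every k with 0 ≤ k ≤ |D| and k < |E|. (In the paper, D = E ∩ E_r^c is the set of edges of the graph G absent from a reference graph G_r, so H(D) = H(G ∩ G_r^c); this is Proposition 2 on homophily-enhancing edge deletion.) -/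
open Finset

lemma count_mem_powersetCard {α : Type*} [DecidableEq α] (D : Finset α) {e : α}
    (he : e ∈ D) (j : ℕ) :
    ((D.powersetCard (j+1)).filter (fun S => e ∈ S)).card
      = (D.card - 1).choose j := by
  rw [← card_erase_of_mem he, ← card_powersetCard]
  refine card_bij' (fun S _ => S.erase e) (fun T _ => insert e T) ?hi ?hj ?li ?ri
  case hi =>
    intro S hS
    rw [mem_filter, mem_powersetCard] at hS
    rw [mem_powersetCard]
    constructor
    · exact (erase_subset_erase e hS.1.1)
    · rw [card_erase_of_mem hS.2, hS.1.2]
      omega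
  case hj =>
    intro T hT
    rw [mem_powersetCard] at hT
    rw [mem_filter, mem_powersetCard]
    refine ⟨⟨?_, ?_⟩, mem_insert_self e T⟩
    · intro x hx
      rcases mem_insert.1 hx with rfl | hx
      · exact he
      · exact (erase_subset e D) (hT.1 hx)
    · rw [card_insert_of_notMem (fun h => (notMem_erase e D) (hT.1 h)), hT.2]
  case li =>
    intro S hS
    rw [mem_filter] at hS
    exact insert_erase hS.2
  case ri =>
    intro T hT
    rw [mem_powersetCard] at hT
    exact erase_insert (fun h => (notMem_erase e D) (hT.1 h))

lemma sum_filter_card_powersetCard {α : Type*} [DecidableEq α] (D : Finset α)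
    (p : α → Prop) [DecidablePred p] (j : ℕ) :
    ∑ S ∈ D.powersetCard (j+1), (S.filter p).card
      = (D.filter p).card * (D.card - 1).choose j := by
  have h1 : ∀ S ∈ D.powersetCard (j+1), (S.filter p).card
      = ∑ e ∈ D.filter p, if e ∈ S then 1 else 0 := by
    intro S hS
    have hsub : S ⊆ D := (mem_powersetCard.1 hS).1
    rw [← card_filter]
    congr 1
    ext a
    simp only [mem_filter]
    exact ⟨fun h => ⟨⟨hsub h.1, h.2⟩, h.1⟩, fun h => ⟨h.2, h.1.2⟩⟩
  rw [Finset.sum_congr rfl h1, Finset.sum_comm]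
  rw [Finset.sum_congr rfl (fun e he => (card_filter _ _).symm)]
  rw [Finset.sum_congr rfl (fun e he =>
    count_mem_powersetCard D (mem_filter.1 he).1 j)]
  rw [Finset.sum_const, smul_eq_mul]



/-- An edge (unordered pair) is *homophilic* if its two endpoints have the
same label. -/
def homophilicEdge {V L : Type*} (ℓ : V → L) : Sym2 V → Prop :=
  Sym2.lift ⟨fun u v => ℓ u = ℓ v, fun _ _ => propext eq_comm⟩

open scoped Classical in
/-- The edge homophily of a finite set of edges: the number of homophilic
edges divided by the total number of edges, as a real number. -/
noncomputable def edgeHomophily {V L : Type*} (ℓ : V → L)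
    (F : Finset (Sym2 V)) : ℝ :=
  ((F.filter fun e => homophilicEdge ℓ e).card : ℝ) / F.card

open scoped Classical in
/-- The expectation, over a uniformly random `k`-subset `S` of `D`, of the
edge homophily of `E \ S`. -/
noncomputable def expDelHomophily {V L : Type*} (ℓ : V → L)
    (E D : Finset (Sym2 V)) (k : ℕ) : ℝ :=
  (∑ S ∈ D.powersetCard k, edgeHomophily ℓ (E \ S)) / (D.card.choose k)

open scoped Classical in
/-- number of homophilic edges -/
noncomputable def hcount {V L : Type*} (ℓ : V → L) (F : Finset (Sym2 V)) : ℕ :=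
  (F.filter fun e => homophilicEdge ℓ e).card

lemma edgeHomophily_eq {V L : Type*} (ℓ : V → L) (F : Finset (Sym2 V)) :
    edgeHomophily ℓ F = (hcount ℓ F : ℝ) / F.card := rfl

open scoped Classical in
lemma expDel_formula {V L : Type*} (ℓ : V → L)
    (E D : Finset (Sym2 V)) (hDE : D ⊆ E) (hDne : D.Nonempty)
    {k : ℕ} (hk : k ≤ D.card) (hkn : k < E.card) :
    expDelHomophily ℓ E D k =
      ((hcount ℓ E : ℝ) * D.card - k * (hcount ℓ D : ℝ))
      / (D.card * (E.card - k)) := by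
  have hm0 : 0 < D.card := card_pos.2 hDne
  have hm0' : (0:ℝ) < D.card := by exact_mod_cast hm0
  have hn0 : 0 < E.card := lt_of_le_of_lt (Nat.zero_le k) hkn
  have hn0' : (0:ℝ) < E.card := by exact_mod_cast hn0
  have hnk : (k:ℝ) < E.card := by exact_mod_cast hkn
  match k, hk, hkn, hnk with
  | 0, hk, hkn, hnk =>
    rw [expDelHomophily, powersetCard_zero, Finset.sum_singleton, sdiff_empty,
      Nat.choose_zero_right, edgeHomophily_eq]
    push_cast
    rw [div_one]
    field_simp
    simp [ne_of_gt hn0']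
  | (j+1), hk, hkn, hnk =>
    have hterm : ∀ S ∈ D.powersetCard (j+1),
        edgeHomophily ℓ (E \ S)
          = ((hcount ℓ E : ℝ) - (hcount ℓ S : ℝ)) / ((E.card : ℝ) - (j+1)) := by
      intro S hS
      obtain ⟨hSD, hScard⟩ := mem_powersetCard.1 hS
      have hSE : S ⊆ E := hSD.trans hDE
      have hfil : ((E \ S).filter fun e => homophilicEdge ℓ e)
          = ((E.filter fun e => homophilicEdge ℓ e)
              \ (S.filter fun e => homophilicEdge ℓ e)) := by
        ext a
        simp only [mem_filter, mem_sdiff]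
        tauto
      have hsub : (S.filter fun e => homophilicEdge ℓ e)
          ⊆ (E.filter fun e => homophilicEdge ℓ e) :=
        filter_subset_filter _ hSE
      rw [edgeHomophily_eq, hcount, hfil, card_sdiff_of_subset hsub, card_sdiff_of_subset hSE, hScard]
      rw [Nat.cast_sub (card_le_card hsub), Nat.cast_sub (le_of_lt hkn)]
      push_cast
      rfl
    rw [expDelHomophily, Finset.sum_congr rfl hterm, ← Finset.sum_div,
      Finset.sum_sub_distrib, Finset.sum_const, card_powersetCard, nsmul_eq_mul]
    have hsum : ∑ S ∈ D.powersetCard (j+1), ((hcount ℓ S : ℕ) : ℝ)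
        = (hcount ℓ D : ℝ) * ((D.card-1).choose j : ℝ) := by
      rw [← Nat.cast_sum]
      rw [show ∑ S ∈ D.powersetCard (j+1), hcount ℓ S
          = ∑ S ∈ D.powersetCard (j+1), (S.filter fun e => homophilicEdge ℓ e).card
          from rfl]
      rw [sum_filter_card_powersetCard D _ j]
      push_cast
      rfl
    rw [hsum]
    have h1 : D.card * (D.card-1).choose j = D.card.choose (j+1) * (j+1) := by
      have h0 := Nat.add_one_mul_choose_eq (D.card-1) j
      have he : D.card - 1 + 1 = D.card := by omega
      rwa [he] at h0
    have hkey : (D.card : ℝ) * ((D.card-1).choose j : ℝ)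
        = ((j:ℝ)+1) * (D.card.choose (j+1) : ℝ) := by
      have h2 := congrArg (Nat.cast : ℕ → ℝ) h1
      push_cast at h2
      linarith
    have hC0 : (0:ℝ) < (D.card.choose (j+1) : ℝ) := by
      exact_mod_cast Nat.choose_pos hk
    have hnk' : (0:ℝ) < (E.card:ℝ) - ((j:ℝ)+1) := by
      push_cast at hnk
      linarith
    have hnk'' : (0:ℝ) < (E.card:ℝ) - (((j:ℕ)+1 : ℕ):ℝ) := by
      push_cast
      linarith
    rw [div_div, div_eq_div_iff (ne_of_gt (mul_pos hnk' hC0)) (ne_of_gt (mul_pos hm0' hnk''))]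
    push_cast
    linear_combination (-((hcount ℓ D : ℝ) * ((E.card:ℝ)-((j:ℝ)+1)))) * hkey

/-- **Proposition 2 (homophily-enhancing edge deletion).** Let `E` be a
nonempty finite set of edges (unordered pairs of distinct vertices) and
`D ⊆ E` nonempty; for `k ≤ |D|` with `k < |E|` let `Ed(k)` be the expectation
over a uniformly random `k`-subset `S` of `D` of the edge homophily `H(E \ S)`.
(i) If `H(D) < H(E)` (which forces `D ≠ E`, hence `|D| < |E|`), then
`Ed(k+1) > Ed(k)` for all `k` with `k + 1 ≤ |D|`, and `Ed(k) > H(E)` for all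
`1 ≤ k ≤ |D|`.
(ii) If `H(D) ≥ H(E)`, then `Ed(k+1) ≤ Ed(k)` for all `k` with `k + 1 ≤ |D|`
and `k + 1 < |E|`, and `Ed(k) ≤ H(E)` for all `k ≤ |D|` with `k < |E|`. -/
theorem expected_homophily_edge_deletion
    {V L : Type*} [Fintype V] [DecidableEq V] (ℓ : V → L)
    (E D : Finset (Sym2 V)) (hDE : D ⊆ E)
    (hEne : E.Nonempty) (hDne : D.Nonempty)
    (hEnd : ∀ e ∈ E, ¬ e.IsDiag) :
    (edgeHomophily ℓ D < edgeHomophily ℓ E →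
      (∀ k : ℕ, k + 1 ≤ D.card →
        expDelHomophily ℓ E D k < expDelHomophily ℓ E D (k + 1)) ∧
      (∀ k : ℕ, 1 ≤ k → k ≤ D.card →
        edgeHomophily ℓ E < expDelHomophily ℓ E D k)) ∧
    (edgeHomophily ℓ D ≥ edgeHomophily ℓ E →
      (∀ k : ℕ, k + 1 ≤ D.card → k + 1 < E.card →
        expDelHomophily ℓ E D (k + 1) ≤ expDelHomophily ℓ E D k) ∧
      (∀ k : ℕ, k ≤ D.card → k < E.card →
        expDelHomophily ℓ E D k ≤ edgeHomophily ℓ E)) := by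
  have hmn : D.card ≤ E.card := card_le_card hDE
  have hm0 : 0 < D.card := card_pos.2 hDne
  have hn0 : 0 < E.card := card_pos.2 hEne
  have hm' : (0:ℝ) < D.card := by exact_mod_cast hm0
  have hn' : (0:ℝ) < E.card := by exact_mod_cast hn0
  have hHE : edgeHomophily ℓ E = (hcount ℓ E : ℝ) / E.card := edgeHomophily_eq ℓ E
  have hHD : edgeHomophily ℓ D = (hcount ℓ D : ℝ) / D.card := edgeHomophily_eq ℓ D
  constructor
  · intro hlt
    rw [hHD, hHE] at hlt
    have key : (hcount ℓ D : ℝ) * E.card < (hcount ℓ E : ℝ) * D.card :=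
      (div_lt_div_iff₀ hm' hn').1 hlt
    have key' : (0:ℝ) < (hcount ℓ E : ℝ) * D.card - (hcount ℓ D : ℝ) * E.card :=
      sub_pos.2 key
    have hmltn : D.card < E.card := by
      rcases lt_or_eq_of_le hmn with h | h
      · exact h
      · exfalso
        have hDEeq : D = E := eq_of_subset_of_card_le hDE h.ge
        subst hDEeq
        exact absurd key (lt_irrefl _)
    constructor
    · intro k hk
      have hkm : k ≤ D.card := by omega
      have hkn : k < E.card := by omega
      have hk1n : k + 1 < E.card := by omega
      rw [expDel_formula ℓ E D hDE hDne hkm hkn,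
        expDel_formula ℓ E D hDE hDne hk hk1n]
      have hknR : (k:ℝ) < E.card := by exact_mod_cast hkn
      have hk1nR : ((k:ℝ)+1) < E.card := by
        have : ((k+1 : ℕ):ℝ) < E.card := by exact_mod_cast hk1n
        push_cast at this
        linarith
      have d1 : (0:ℝ) < (D.card:ℝ) * ((E.card:ℝ) - k) := mul_pos hm' (by linarith)
      have d2 : (0:ℝ) < (D.card:ℝ) * ((E.card:ℝ) - ((k:ℕ)+1 : ℕ)) := by
        push_cast
        exact mul_pos hm' (by linarith)
      rw [div_lt_div_iff₀ d1 d2]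
      push_cast
      nlinarith [mul_pos hm' key']
    · intro k hk1 hkm
      have hkn : k < E.card := by omega
      rw [hHE, expDel_formula ℓ E D hDE hDne hkm hkn]
      have hknR : (k:ℝ) < E.card := by exact_mod_cast hkn
      have d1 : (0:ℝ) < (D.card:ℝ) * ((E.card:ℝ) - k) := mul_pos hm' (by linarith)
      rw [div_lt_div_iff₀ hn' d1]
      have hkpos : (0:ℝ) < k := by exact_mod_cast hk1
      nlinarith [mul_pos hkpos key']
  · intro hge
    rw [hHD, hHE, ge_iff_le] at hge
    have key2 : (hcount ℓ E : ℝ) * D.card ≤ (hcount ℓ D : ℝ) * E.card :=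
      (div_le_div_iff₀ hn' hm').1 hge
    have key2' : (0:ℝ) ≤ (hcount ℓ D : ℝ) * E.card - (hcount ℓ E : ℝ) * D.card :=
      sub_nonneg.2 key2
    constructor
    · intro k hk hk1n
      have hkm : k ≤ D.card := by omega
      have hkn : k < E.card := by omega
      rw [expDel_formula ℓ E D hDE hDne hkm hkn,
        expDel_formula ℓ E D hDE hDne hk hk1n]
      have hknR : (k:ℝ) < E.card := by exact_mod_cast hkn
      have hk1nR : ((k:ℝ)+1) < E.card := by
        have : ((k+1 : ℕ):ℝ) < E.card := by exact_mod_cast hk1n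
        push_cast at this
        linarith
      have d1 : (0:ℝ) < (D.card:ℝ) * ((E.card:ℝ) - k) := mul_pos hm' (by linarith)
      have d2 : (0:ℝ) < (D.card:ℝ) * ((E.card:ℝ) - ((k:ℕ)+1 : ℕ)) := by
        push_cast
        exact mul_pos hm' (by linarith)
      rw [div_le_div_iff₀ d2 d1]
      push_cast
      nlinarith [mul_nonneg hm'.le key2']
    · intro k hkm hkn
      rw [hHE, expDel_formula ℓ E D hDE hDne hkm hkn]
      have hknR : (k:ℝ) < E.card := by exact_mod_cast hkn
      have d1 : (0:ℝ) < (D.card:ℝ) * ((E.card:ℝ) - k) := mul_pos hm' (by linarith)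
      rw [div_le_div_iff₀ d1 hn']
      nlinarith [mul_nonneg (Nat.cast_nonneg k : (0:ℝ) ≤ k) key2']
end

section
/- Let E be a finite set of edges on a labeled vertex set and let D ⊆ E be nonempty, let n and m be the numbers of homophilic and heterophilic edges in E, and let n* and m* be the numbers of homophilic and heterophilic edges in D (so n* + m* = |D|). Then for every natural number k with 0 ≤ k ≤ |D| and k < |E| = n + m, the expectation over a uniformly random k-subset S of D of the edge homophily H(E \ S) equals (n − k · n*/(n* + m*)) / (n + m − k), as real numbers. -/
open scoped Classical in
/-- The number of homophilic edges in `F`. -/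
noncomputable def homoCount {V L : Type*} (ℓ : V → L)
    (F : Finset (Sym2 V)) : ℕ :=
  (F.filter fun e => homophilicEdge ℓ e).card

open scoped Classical in
/-- The number of heterophilic edges in `F`. -/
noncomputable def heteroCount {V L : Type*} (ℓ : V → L)
    (F : Finset (Sym2 V)) : ℕ :=
  (F.filter fun e => ¬ homophilicEdge ℓ e).card

open Finset

theorem countContain {α : Type*} [DecidableEq α] (D : Finset α) (e : α) (he : e ∈ D) (j : ℕ) :
    ((D.powersetCard (j+1)).filter (fun S => e ∈ S)).card = (D.card - 1).choose j := by
  rw [← card_erase_of_mem he, ← card_powersetCard]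
  apply card_bij' (fun S _ => S.erase e) (fun T _ => insert e T)
  · intro S hS
    simp only [mem_filter] at hS
    exact insert_erase hS.2
  · intro T hT
    simp only [mem_powersetCard] at hT
    exact erase_insert fun h => (mem_erase.1 (hT.1 h)).1 rfl
  · intro S hS
    simp only [mem_filter, mem_powersetCard] at hS
    simp [mem_powersetCard, card_erase_of_mem hS.2,
      erase_subset_erase e hS.1.1, hS.1.2]
  · intro T hT
    simp only [mem_powersetCard] at hT
    have heT : e ∉ T := fun h => (mem_erase.1 (hT.1 h)).1 rfl
    simp [mem_filter, mem_powersetCard, card_insert_of_notMem heT, hT.2,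
      insert_subset_iff, he, hT.1.trans (erase_subset _ _)]

open scoped Classical in
lemma homoCount_mono {V L : Type*} (ℓ : V → L) {S E : Finset (Sym2 V)} (h : S ⊆ E) :
    homoCount ℓ S ≤ homoCount ℓ E :=
  card_le_card (filter_subset_filter _ h)

open scoped Classical in
lemma homoCount_sdiff {V L : Type*} [DecidableEq (Sym2 V)] (ℓ : V → L) {S E : Finset (Sym2 V)} (h : S ⊆ E) :
    homoCount ℓ (E \ S) = homoCount ℓ E - homoCount ℓ S := by
  unfold homoCount
  have : (E \ S).filter (fun e => homophilicEdge ℓ e)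
      = E.filter (fun e => homophilicEdge ℓ e) \ S.filter (fun e => homophilicEdge ℓ e) := by
    ext e; simp only [mem_filter, mem_sdiff]; tauto
  rw [this, card_sdiff_of_subset (filter_subset_filter _ h)]

open scoped Classical in
lemma sum_homoCount {V L : Type*} (ℓ : V → L) (D : Finset (Sym2 V)) (j : ℕ) :
    ∑ S ∈ D.powersetCard (j+1), homoCount ℓ S
      = homoCount ℓ D * (D.card - 1).choose j := by
  unfold homoCount
  have key : ∀ S ∈ D.powersetCard (j+1),
      (S.filter fun e => homophilicEdge ℓ e).card
        = ∑ e ∈ D.filter (fun e => homophilicEdge ℓ e), if e ∈ S then 1 else 0 := by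
    intro S hS
    rw [mem_powersetCard] at hS
    rw [← card_filter]
    congr 1
    ext e
    simp only [mem_filter]
    constructor
    · rintro ⟨h1, h2⟩; exact ⟨⟨hS.1 h1, h2⟩, h1⟩
    · rintro ⟨⟨_, h2⟩, h1⟩; exact ⟨h1, h2⟩
  rw [Finset.sum_congr rfl key, Finset.sum_comm]
  rw [← Finset.sum_attach (D.filter fun e => homophilicEdge ℓ e)
    (fun e => ∑ S ∈ D.powersetCard (j+1), if e ∈ S then 1 else 0)]
  have : ∀ e : (D.filter fun e => homophilicEdge ℓ e),
      (∑ S ∈ D.powersetCard (j+1), if (e : Sym2 V) ∈ S then 1 else 0)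
        = (D.card - 1).choose j := by
    intro e
    rw [← card_filter, countContain D e (mem_of_mem_filter _ e.2)]
  rw [Finset.sum_congr rfl (fun e _ => this e)]
  simp [mul_comm]

/-- Let `E` be a finite set of edges (unordered pairs of distinct vertices)
and `D ⊆ E` nonempty, with `n, m` the numbers of homophilic and heterophilic
edges of `E`, and `n*, m*` those of `D` (so `n* + m* = |D|`). Then for every
`k ≤ |D|` with `k < |E| = n + m`, the expectation over a uniformly random
`k`-subset `S` of `D` of the edge homophily `H(E \ S)` is
`(n - k · n*/(n* + m*)) / (n + m - k)`. -/
theorem expected_homophily_edge_deletion_formula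
    {V L : Type*} [Fintype V] [DecidableEq V] (ℓ : V → L)
    (E D : Finset (Sym2 V)) (hDE : D ⊆ E) (hDne : D.Nonempty)
    (hEnd : ∀ e ∈ E, ¬ e.IsDiag)
    (n m nstar mstar : ℕ)
    (hn : n = homoCount ℓ E) (hm : m = heteroCount ℓ E)
    (hns : nstar = homoCount ℓ D) (hms : mstar = heteroCount ℓ D)
    (k : ℕ) (hk : k ≤ D.card) (hkE : k < E.card) (hnm : E.card = n + m) :
    expDelHomophily ℓ E D k =
      ((n : ℝ) - k * nstar / ((nstar : ℝ) + mstar)) / ((n : ℝ) + m - k) := by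
  classical
  have hd : nstar + mstar = D.card := by
    rw [hns, hms]; exact card_filter_add_card_filter_not _
  have hdpos : 0 < D.card := card_pos.2 hDne
  have hNk : (0:ℝ) < (n:ℝ) + m - k := by
    have : (k:ℝ) < (n:ℝ) + m := by
      have := hkE; rw [hnm] at this; exact_mod_cast this
    linarith
  have hNk' : ((n:ℝ) + m - k) ≠ 0 := ne_of_gt hNk
  -- per subset computation
  have per : ∀ S ∈ D.powersetCard k,
      edgeHomophily ℓ (E \ S) = ((n:ℝ) - homoCount ℓ S) / ((n:ℝ) + m - k) := by
    intro S hS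
    rw [mem_powersetCard] at hS
    have hSE : S ⊆ E := hS.1.trans hDE
    have hcard : (E \ S).card = E.card - k := by
      rw [card_sdiff_of_subset hSE, hS.2]
    have h1 : homoCount ℓ (E \ S) = n - homoCount ℓ S := by
      rw [homoCount_sdiff ℓ hSE, ← hn]
    have hle : homoCount ℓ S ≤ n := hn ▸ homoCount_mono ℓ hSE
    have : edgeHomophily ℓ (E \ S) = ((homoCount ℓ (E \ S) : ℝ)) / ((E \ S).card) := rfl
    rw [this, h1, hcard]
    have c1 : ((n - homoCount ℓ S : ℕ) : ℝ) = (n:ℝ) - homoCount ℓ S :=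
      Nat.cast_sub hle
    have c2 : ((E.card - k : ℕ) : ℝ) = (n:ℝ) + m - k := by
      rw [Nat.cast_sub hkE.le, hnm]; push_cast; ring
    rw [c1, c2]
  have unf : expDelHomophily ℓ E D k
      = (∑ S ∈ D.powersetCard k, edgeHomophily ℓ (E \ S)) / (D.card.choose k) := by
    unfold expDelHomophily; congr!
  rw [unf, Finset.sum_congr rfl per]
  rcases Nat.eq_zero_or_pos k with hk0 | hkpos
  · subst hk0
    simp only [powersetCard_zero, sum_singleton, Nat.choose_zero_right, Nat.cast_one, div_one]
    have : homoCount ℓ (∅ : Finset (Sym2 V)) = 0 := by simp [homoCount]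
    rw [this]
    push_cast
    ring
  · obtain ⟨j, rfl⟩ : ∃ j, k = j + 1 := ⟨k - 1, (Nat.succ_pred_eq_of_pos hkpos).symm⟩
    have hsum : ∑ S ∈ D.powersetCard (j+1), ((n:ℝ) - homoCount ℓ S)
        = (D.card.choose (j+1) : ℝ) * n - nstar * ((D.card - 1).choose j) := by
      rw [Finset.sum_sub_distrib, Finset.sum_const, card_powersetCard]
      have : ∑ S ∈ D.powersetCard (j+1), (homoCount ℓ S : ℝ)
          = (nstar : ℝ) * ((D.card - 1).choose j) := by
        rw [← Nat.cast_sum]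
        rw [sum_homoCount ℓ D j, hns]
        push_cast; ring
      rw [this]; push_cast; ring
    rw [← Finset.sum_div, hsum, div_div]
    -- key binomial identity
    have idN : D.card * (D.card - 1).choose j = D.card.choose (j+1) * (j+1) := by
      conv_lhs => rw [← Nat.succ_pred_eq_of_pos hdpos]
      conv_rhs => rw [← Nat.succ_pred_eq_of_pos hdpos]
      exact Nat.add_one_mul_choose_eq (D.card - 1) j
    have idR : (D.card : ℝ) * ((D.card - 1).choose j) = (D.card.choose (j+1) : ℝ) * (j+1) := by
      exact_mod_cast idN
    have hC : (D.card.choose (j+1) : ℝ) ≠ 0 :=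
      Nat.cast_ne_zero.2 (Nat.choose_pos hk).ne'
    have hdR : ((nstar : ℝ) + mstar) = (D.card : ℝ) := by exact_mod_cast hd
    have hdne : (D.card : ℝ) ≠ 0 := Nat.cast_ne_zero.2 hdpos.ne'
    have key : ((D.card.choose (j+1):ℝ) * n - nstar * ((D.card-1).choose j))
        = ((n:ℝ) - (↑(j+1)) * nstar / (D.card:ℝ)) * (D.card.choose (j+1)) := by
      field_simp
      push_cast
      push_cast at idR
      linear_combination (-1 : ℝ) * nstar * idR
    rw [hdR, key, mul_div_mul_right _ _ hC]
end
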